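/- In the monoid PT_n of partial transformations of {1,...,n}, the subsemigroup generated by all idempotents is exactly the set of all partial transformations that are not non-identity permutations; that is, ⟨E(PT_n)⟩ = (PT_n ∖ S_n) ∪ {id}. -/

import Mathlib

attribute [local instance] Classical.propDecidable

/-- The monoid of partial transformations of `{1,…,n}`, written as partial maps
on `Fin n`, composed left-to-right: `x(αβ) = (xα)β`. -/
def PT (n : ℕ) : Type := Fin n → Option (Fin n)

instance (n : ℕ) : Mul (PT n) := ⟨fun α β x => (α x).bind β⟩
instance (n : ℕ) : One (PT n) := ⟨fun x => some x⟩

instance (n : ℕ) : Monoid (PT n) where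
  mul_assoc a b c := funext fun x => by
    show ((a x).bind b).bind c = (a x).bind fun y => (b y).bind c
    cases a x <;> rfl
  one_mul a := funext fun _ => rfl
  mul_one a := funext fun x => by
    show (a x).bind some = a x
    cases a x <;> rfl

namespace PT
variable {n : ℕ}

/-- The domain of a partial transformation. -/
def dom (α : PT n) : Set (Fin n) := {x | α x ≠ none}

/-- The image of a partial transformation. -/
def im (α : PT n) : Set (Fin n) := {y | ∃ x, α x = some y}

/-- The kernel: the partial equivalence `{(x,y) : x,y ∈ dom α, xα = yα}`. -/
def ker (α : PT n) : Fin n → Fin n → Prop :=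
  fun x y => x ∈ α.dom ∧ y ∈ α.dom ∧ α x = α y

/-- The principal left ideal `PT_n · α` (the monoid contains `1`, so it contains `α`). -/
def leftIdeal (α : PT n) : Set (PT n) := Set.range fun γ => γ * α

/-- The principal right ideal `α · PT_n`. -/
def rightIdeal (α : PT n) : Set (PT n) := Set.range fun γ => α * γ

end PT

/-!
A product of partial transformations that is a permutation has both factors permutations, and
an idempotent permutation is the identity; so idempotents generate no other permutation.

Conversely, if `a` is not in the image of `α`, then `α = α[x ↦ a] · ε` for every `x`, where the
idempotent `ε` is the identity except that it sends `a` to `α x`. With `x = a` this fixes the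
displaced point `a`, which makes progress in an induction on the number of displaced points,
unless `α[a ↦ a]` is a permutation `σ`. In that case one parks a point `x` moved by `σ` at `a`,
which opens a hole at `σ x` that is then filled; if `α` is total, it is first made undefined at
`a` by a left idempotent factor, using that `α a` has a second preimage.
-/

open Finset

namespace PT
variable {n : ℕ} {α β : PT n} {a x y : Fin n}

theorem mul_apply_of_eq_some (h : α x = some y) (β : PT n) : (α * β) x = β y := by
  show (α x).bind β = β y
  rw [h]
  rfl

theorem mul_apply_of_eq_none (h : α x = none) (β : PT n) : (α * β) x = none := by
  show (α x).bind β = none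
  rw [h]
  rfl

theorem one_apply (x : Fin n) : (1 : PT n) x = some x := rfl

def update (α : PT n) (a : Fin n) (w : Option (Fin n)) : PT n := Function.update α a w

@[simp]
theorem update_self (α : PT n) (a : Fin n) (w : Option (Fin n)) : update α a w a = w :=
  Function.update_self ..

@[simp]
theorem update_of_ne (h : x ≠ a) (α : PT n) (w : Option (Fin n)) : update α a w x = α x :=
  Function.update_of_ne h ..

theorem update_one_mul_self (a : Fin n) (w : Option (Fin n)) :
    update 1 a w * update 1 a w = update 1 a w := by
  funext v
  by_cases hv : v = a
  · subst hv
    cases w with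
    | none => rw [mul_apply_of_eq_none (update_self ..), update_self]
    | some d =>
      rw [mul_apply_of_eq_some (update_self ..)]
      by_cases hd : d = v
      · rw [hd, update_self]
      · rw [update_of_ne hd, one_apply, update_self]
  · rw [mul_apply_of_eq_some ((update_of_ne hv ..).trans (one_apply v))]

theorem eq_update_mul_update_one (ha : ∀ v, α v ≠ some a) (x : Fin n) :
    α = update α x (some a) * update 1 a (α x) := by
  funext v
  by_cases hv : v = x
  · rw [hv, mul_apply_of_eq_some (update_self ..), update_self]
  · cases hαv : α v with
    | none => rw [mul_apply_of_eq_none ((update_of_ne hv ..).trans hαv)]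
    | some u =>
      have hu : u ≠ a := by rintro rfl; exact ha v hαv
      rw [mul_apply_of_eq_some ((update_of_ne hv ..).trans hαv), update_of_ne hu, one_apply]

theorem eq_update_one_mul_update (hxy : x ≠ y) (h : α x = α y) (w : Option (Fin n)) :
    α = update 1 x (some y) * update α x w := by
  funext v
  by_cases hv : v = x
  · rw [hv, mul_apply_of_eq_some (update_self ..), update_of_ne hxy.symm, h]
  · rw [mul_apply_of_eq_some ((update_of_ne hv ..).trans (one_apply v)), update_of_ne hv]

def IsPerm (α : PT n) : Prop := ∃ σ : Equiv.Perm (Fin n), ∀ x, α x = some (σ x)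

theorem isPerm_of_forall_exists_eq_some (h : ∀ b, ∃ x, α x = some b) : IsPerm α := by
  choose g hg using h
  have hg_inj : Function.Injective g := fun b b' hbb' =>
    Option.some_injective _ ((hg b).symm.trans (hbb' ▸ hg b'))
  let g' := Equiv.ofBijective g (Finite.injective_iff_bijective.mp hg_inj)
  refine ⟨g'.symm, fun x => ?_⟩
  conv_lhs => rw [← g'.apply_symm_apply x]
  exact hg _

theorem exists_forall_ne_some_of_not_isPerm (h : ¬ IsPerm α) : ∃ a, ∀ x, α x ≠ some a := by
  by_contra! h'
  exact h (isPerm_of_forall_exists_eq_some h')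

theorem IsPerm.of_mul_left (h : IsPerm (α * β)) : IsPerm α := by
  obtain ⟨τ, hτ⟩ := h
  choose f hf hβf using fun x => Option.bind_eq_some_iff.mp (hτ x)
  have hf_inj : Function.Injective f := fun x x' hxx' =>
    τ.injective (Option.some_injective _ ((hβf x).symm.trans (hxx' ▸ hβf x')))
  exact ⟨Equiv.ofBijective f (Finite.injective_iff_bijective.mp hf_inj), hf⟩

theorem IsPerm.of_mul_right (h : IsPerm (α * β)) : IsPerm β := by
  obtain ⟨τ, hτ⟩ := h
  refine isPerm_of_forall_exists_eq_some fun b => ?_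
  obtain ⟨y, -, hy⟩ := Option.bind_eq_some_iff.mp (hτ (τ.symm b))
  exact ⟨y, by rw [hy, τ.apply_symm_apply]⟩

theorem IsPerm.eq_one_of_mul_self (h : IsPerm α) (hα : α * α = α) : α = 1 := by
  obtain ⟨σ, hσ⟩ := h
  funext x
  have hσσ : some (σ (σ x)) = some (σ x) := by
    rw [← hσ, ← hσ, ← mul_apply_of_eq_some (hσ x) α, hα]
  rw [hσ, σ.injective (Option.some_injective _ hσσ), one_apply]

noncomputable def displaced (α : PT n) : Finset (Fin n) := {x | α x ≠ some x}

theorem mem_displaced : x ∈ displaced α ↔ α x ≠ some x := by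
  simp [displaced]

theorem displaced_update_self (α : PT n) (x : Fin n) :
    displaced (update α x (some x)) = (displaced α).erase x := by
  ext v
  by_cases hv : v = x <;> simp [hv, mem_displaced]

theorem displaced_update_of_ne {w : Option (Fin n)} (hx : α x ≠ some x) (hw : w ≠ some x) :
    displaced (update α x w) = displaced α := by
  ext v
  by_cases hv : v = x
  · subst hv
    simp [mem_displaced, hx, hw]
  · simp [mem_displaced, hv]

abbrev idempotentClosure (n : ℕ) : Subsemigroup (PT n) :=
  Subsemigroup.closure {e : PT n | e * e = e}

theorem update_one_mem_idempotentClosure (a : Fin n) (w : Option (Fin n)) :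
    update 1 a w ∈ idempotentClosure n :=
  Subsemigroup.subset_closure (update_one_mul_self a w)

theorem exists_descent_of_eq_perm_off_of_eq_none {σ : Equiv.Perm (Fin n)} (hσa : σ a = a)
    (hσ : σ ≠ 1) (hα : ∀ x ≠ a, α x = some (σ x)) (ha : α a = none) :
    ∃ β, ¬ IsPerm β ∧ #(displaced β) < #(displaced α) ∧
      (β ∈ idempotentClosure n → α ∈ idempotentClosure n) := by
  obtain ⟨x, hx⟩ : ∃ x, σ x ≠ x := by
    by_contra! h
    exact hσ (Equiv.ext h)
  have hxa : x ≠ a := by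
    rintro rfl
    exact hx hσa
  have hca : σ x ≠ a := fun h => hxa (σ.injective (h.trans hσa.symm))
  have ha_hole : ∀ v, α v ≠ some a := by
    intro v hv
    by_cases hva : v = a
    · rw [hva, ha] at hv
      cases hv
    · rw [hα v hva, ← hσa] at hv
      exact hva (σ.injective (Option.some_injective _ hv))
  -- parking `x` at the hole `a` opens a hole at `σ x`
  have hσx_hole : ∀ v, update α x (some a) v ≠ some (σ x) := by
    intro v hv
    by_cases hvx : v = x
    · rw [hvx, update_self] at hv
      exact hca (Option.some_injective _ hv).symm
    · rw [update_of_ne hvx] at hv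
      have hva : v ≠ a := by
        rintro rfl
        rw [ha] at hv
        cases hv
      rw [hα v hva] at hv
      exact hvx (σ.injective (Option.some_injective _ hv))
  refine ⟨update (update α x (some a)) (σ x) (some (σ x)), fun ⟨τ, hτ⟩ => ?_, ?_, fun hδ => ?_⟩
  · have hτa := hτ a
    rw [update_of_ne hca.symm, update_of_ne hxa.symm, ha] at hτa
    cases hτa
  · calc _ < #(displaced (update α x (some a))) := by
          rw [displaced_update_self]
          exact card_erase_lt_of_mem (mem_displaced.mpr (hσx_hole _))
      _ = #(displaced α) := by
          refine congrArg _ (displaced_update_of_ne ?_ ?_)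
          · rw [hα x hxa]
            exact fun h => hx (Option.some_injective _ h)
          · exact fun h => hxa (Option.some_injective _ h).symm
  · rw [eq_update_mul_update_one ha_hole x, eq_update_mul_update_one hσx_hole (σ x)]
    exact mul_mem (mul_mem hδ (update_one_mem_idempotentClosure _ _))
      (update_one_mem_idempotentClosure _ _)

theorem exists_descent_of_eq_perm_off {σ : Equiv.Perm (Fin n)} (hσa : σ a = a)
    (hα : ∀ x ≠ a, α x = some (σ x)) (ha : α a ≠ some a) :
    α * α = α ∨ ∃ β, ¬ IsPerm β ∧ #(displaced β) < #(displaced α) ∧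
      (β ∈ idempotentClosure n → α ∈ idempotentClosure n) := by
  by_cases hσ : σ = 1
  · left
    have hα1 : α = update 1 a (α a) := by
      funext v
      by_cases hva : v = a
      · rw [hva, update_self]
      · rw [update_of_ne hva, hα v hva, hσ, one_apply, Equiv.Perm.one_apply]
    rw [hα1]
    exact update_one_mul_self a _
  right
  cases hd : α a with
  | none => exact exists_descent_of_eq_perm_off_of_eq_none hσa hσ hα hd
  | some d =>
    have hya : σ.symm d ≠ a := by
      rintro h
      apply ha
      rw [hd, ← hσa, ← h, σ.apply_symm_apply]
    obtain ⟨β, hβ, hlt, hmem⟩ :=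
      exists_descent_of_eq_perm_off_of_eq_none (α := update α a none) hσa hσ
        (fun x hx => by rw [update_of_ne hx, hα x hx]) (update_self ..)
    refine ⟨β, hβ, ?_, fun h => ?_⟩
    · rwa [displaced_update_of_ne ha (Option.some_ne_none a).symm] at hlt
    · have hαy : α a = α (σ.symm d) := by rw [hd, hα _ hya, σ.apply_symm_apply]
      rw [eq_update_one_mul_update hya.symm hαy none]
      exact mul_mem (update_one_mem_idempotentClosure _ _) (hmem h)

theorem exists_descent (h : ¬ IsPerm α) :
    α * α = α ∨ ∃ β, ¬ IsPerm β ∧ #(displaced β) < #(displaced α) ∧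
      (β ∈ idempotentClosure n → α ∈ idempotentClosure n) := by
  obtain ⟨a, ha⟩ := exists_forall_ne_some_of_not_isPerm h
  by_cases hβ : IsPerm (update α a (some a))
  · obtain ⟨σ, hσ⟩ := hβ
    refine exists_descent_of_eq_perm_off (σ := σ) ?_ (fun x hx => ?_) (ha a)
    · simpa using (hσ a).symm
    · rw [← hσ x, update_of_ne hx]
  · right
    refine ⟨_, hβ, ?_, fun h => ?_⟩
    · rw [displaced_update_self]
      exact card_erase_lt_of_mem (mem_displaced.mpr (ha a))
    · rw [eq_update_mul_update_one ha a]
      exact mul_mem h (update_one_mem_idempotentClosure _ _)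

theorem mem_idempotentClosure_of_not_isPerm {α : PT n} (h : ¬ IsPerm α) :
    α ∈ idempotentClosure n := by
  rcases exists_descent h with hα | ⟨β, hβ, -, hmem⟩
  · exact Subsemigroup.subset_closure hα
  · exact hmem (mem_idempotentClosure_of_not_isPerm hβ)
termination_by #(displaced α)

theorem not_isPerm_or_eq_one_of_mem_idempotentClosure (h : α ∈ idempotentClosure n) :
    ¬ IsPerm α ∨ α = 1 := by
  induction h using Subsemigroup.closure_induction with
  | mem e he =>
    by_cases hp : IsPerm e
    · exact Or.inr (hp.eq_one_of_mul_self he)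
    · exact Or.inl hp
  | mul α β _ _ hα hβ =>
    by_cases hp : IsPerm (α * β)
    · right
      rw [hα.resolve_left (not_not.mpr hp.of_mul_left),
        hβ.resolve_left (not_not.mpr hp.of_mul_right), one_mul]
    · exact Or.inl hp

end PT

/-- Evseev–Podran: the subsemigroup of `PT_n` generated by the idempotents consists
exactly of the partial transformations that are not non-identity permutations. -/
theorem stmt_9 (n : ℕ) :
    ((Subsemigroup.closure {e : PT n | e * e = e} : Subsemigroup (PT n)) : Set (PT n)) =
      {α : PT n | ¬ ∃ σ : Equiv.Perm (Fin n), ∀ x, α x = some (σ x)} ∪ {1} := by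
  ext α
  constructor
  · exact PT.not_isPerm_or_eq_one_of_mem_idempotentClosure
  · rintro (h | rfl)
    · exact PT.mem_idempotentClosure_of_not_isPerm h
    · exact Subsemigroup.subset_closure (mul_one 1)
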